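/- arXiv:1609.06085 — 3 statements merged into one kernel-verified Lean document; each statement's English description precedes it below -/
import Mathlib

section
/- Let S be a monoid with zero 0_S and identity 1_S, let λ be a nonempty set, let h : S → S be an automorphism of the semigroup S, let φ : λ → λ be a bijection, and let u : λ → H₁ be a map into the group of units H₁ of S. Then the map σ on the Brandt λ⁰-extension B⁰_λ(S) defined by σ(α, s, β) = (φ(α), u(α)·h(s)·(u(β))⁻¹, φ(β)) for nonzero s and σ(0) = 0 is an automorphism of the semigroup B⁰_λ(S). -/
/-- The Brandt λ⁰-extension `B⁰_Λ(S)` of a semigroup `S` with zero: its underlying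
set is `(Λ × (S \ {0_S}) × Λ) ∪ {0}`, where `none` plays the role of the zero `0`. -/
def Brandt (Λ S : Type*) [Zero S] : Type _ :=
  Option (Λ × {s : S // s ≠ 0} × Λ)

namespace Brandt

variable {Λ S : Type*}

instance [Zero S] : Zero (Brandt Λ S) := ⟨none⟩

open Classical in
/-- `(α, a, β)·(γ, b, δ) = (α, ab, δ)` if `β = γ` and `ab ≠ 0_S`, and `0` otherwise;
`0` is a two-sided zero. -/
noncomputable instance [Zero S] [Mul S] : Mul (Brandt Λ S) :=
  ⟨fun x y =>
    match x, y with
    | some (α, a, β), some (γ, b, δ) =>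
        if h : β = γ ∧ a.1 * b.1 ≠ 0 then some (α, ⟨a.1 * b.1, h.2⟩, δ) else 0
    | _, _ => 0⟩

open Classical in
/-- `Brandt.mk α s β` is the element `(α, s, β)` of `B⁰_Λ(S)` if `s ≠ 0`, and `0` otherwise. -/
noncomputable def mk [Zero S] (α : Λ) (s : S) (β : Λ) : Brandt Λ S :=
  if h : s ≠ 0 then some (α, ⟨s, h⟩, β) else 0

end Brandt

/-- An automorphism of a semigroup: a bijective map preserving the multiplication. -/
def IsSemigroupAut {T : Type*} [Mul T] (σ : T → T) : Prop :=
  Function.Bijective σ ∧ ∀ x y : T, σ (x * y) = σ x * σ y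

/-! The map `σ` is the twist of `B⁰_Λ(S)` by the triple `(h, φ, u)`. Twisting is multiplicative
because in a product `(α, s, β)(β, t, δ)` the unit factors `u(β)⁻¹ u(β)` cancel in the middle, and
twists compose like elements of a semidirect product, so the twist by
`(h⁻¹, φ⁻¹, α ↦ h⁻¹(u(φ⁻¹ α))⁻¹)` is a two-sided inverse. -/

namespace Brandt

section Mul

variable {Λ S : Type*} [MulZeroClass S]

noncomputable instance : MulZeroClass (Brandt Λ S) where
  zero_mul x := by cases x <;> rfl
  mul_zero x := by rcases x with _ | ⟨_, _, _⟩ <;> rfl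

@[simp]
theorem mk_zero (α β : Λ) : (mk α 0 β : Brandt Λ S) = 0 := by
  simp [mk]

theorem mk_of_ne_zero {s : S} (hs : s ≠ 0) (α β : Λ) :
    (mk α s β : Brandt Λ S) = some (α, ⟨s, hs⟩, β) :=
  dif_pos hs

@[elab_as_elim]
theorem induction_on {motive : Brandt Λ S → Prop} (x : Brandt Λ S) (zero : motive 0)
    (mk : ∀ α s β, s ≠ 0 → motive (mk α s β)) : motive x := by
  rcases x with _ | ⟨α, ⟨s, hs⟩, β⟩
  · exact zero
  · simpa [mk_of_ne_zero hs] using mk α s β hs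

open Classical in
theorem mk_mul_mk (α β γ δ : Λ) (s t : S) :
    (mk α s β : Brandt Λ S) * mk γ t δ = if β = γ then mk α (s * t) δ else 0 := by
  rcases eq_or_ne s 0 with rfl | hs
  · simp
  rcases eq_or_ne t 0 with rfl | ht
  · simp
  rw [mk_of_ne_zero hs, mk_of_ne_zero ht]
  change (if h : β = γ ∧ s * t ≠ 0 then (some (α, ⟨s * t, h.2⟩, δ) : Brandt Λ S)
    else (0 : Brandt Λ S)) = _
  by_cases hβγ : β = γ
  · by_cases hst : s * t = 0
    · rw [if_pos hβγ, show (mk α (s * t) δ : Brandt Λ S) = 0 by rw [hst, mk_zero]]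
      exact dif_neg fun h ↦ h.2 hst
    · rw [if_pos hβγ, mk_of_ne_zero hst]
      exact dif_pos ⟨hβγ, hst⟩
  · rw [if_neg hβγ]
    exact dif_neg fun h ↦ hβγ h.1

end Mul

section Twist

variable {Λ Λ' Λ'' R S T : Type*} [MonoidWithZero R] [MonoidWithZero S] [MonoidWithZero T]

noncomputable def twist (h : S ≃* T) (φ : Λ ≃ Λ') (u : Λ → Tˣ) : Brandt Λ S → Brandt Λ' T
  | none => 0
  | some (α, s, β) => mk (φ α) (u α * h s * ↑(u β)⁻¹) (φ β)

variable (h : S ≃* T) (φ : Λ ≃ Λ') (u : Λ → Tˣ)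

@[simp]
theorem twist_zero : twist h φ u 0 = 0 := rfl

@[simp]
theorem twist_mk (α β : Λ) (s : S) :
    twist h φ u (mk α s β) = mk (φ α) (u α * h s * ↑(u β)⁻¹) (φ β) := by
  rcases eq_or_ne s 0 with rfl | hs
  · simp
  · rw [mk_of_ne_zero hs]
    rfl

theorem twist_mul (x y : Brandt Λ S) : twist h φ u (x * y) = twist h φ u x * twist h φ u y := by
  classical
  induction x using induction_on with
  | zero => simp
  | mk α s β _ =>
    induction y using induction_on with
    | zero => simp
    | mk γ t δ _ =>
      simp only [mk_mul_mk, twist_mk, φ.injective.eq_iff]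
      split_ifs with hβγ
      · subst hβγ
        simp [mul_assoc]
      · simp

theorem twist_twist (h' : R ≃* S) (φ' : Λ'' ≃ Λ) (u' : Λ'' → Sˣ) (x : Brandt Λ'' R) :
    twist h φ u (twist h' φ' u' x) =
      twist (h'.trans h) (φ'.trans φ) (fun α ↦ u (φ' α) * Units.map h.toMonoidHom (u' α)) x := by
  induction x using induction_on with
  | zero => simp
  | mk α s β _ => simp [mul_assoc]

theorem twist_refl (x : Brandt Λ S) : twist (MulEquiv.refl S) (Equiv.refl Λ) 1 x = x := by
  induction x using induction_on with
  | zero => rfl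
  | mk α s β _ => simp

theorem bijective_twist : Function.Bijective (twist h φ u) := by
  refine Function.bijective_iff_has_inverse.mpr
    ⟨twist h.symm φ.symm fun α ↦ (Units.map h.symm.toMonoidHom (u (φ.symm α)))⁻¹,
      fun x ↦ ?_, fun x ↦ ?_⟩
  all_goals
    rw [twist_twist]
    convert twist_refl x using 2 <;> ext <;> simp

theorem isSemigroupAut_twist (h : S ≃* S) (φ : Λ ≃ Λ) (u : Λ → Sˣ) :
    IsSemigroupAut (twist h φ u) :=
  ⟨bijective_twist h φ u, twist_mul h φ u⟩

end Twist

end Brandt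

theorem stmt_0_general {Λ S : Type*} [MonoidWithZero S]
    (h : S ≃* S) (φ : Λ ≃ Λ) (u : Λ → Sˣ)
    (σ : Brandt Λ S → Brandt Λ S)
    (hσ : ∀ (α β : Λ) (s : S), s ≠ 0 →
      σ (Brandt.mk α s β) = Brandt.mk (φ α) ((u α : S) * h s * ((u β)⁻¹ : Sˣ)) (φ β))
    (hσ0 : σ 0 = 0) :
    IsSemigroupAut σ := by
  have hσ_eq : σ = Brandt.twist h φ u := funext fun x ↦ by
    induction x using Brandt.induction_on with
    | zero => exact hσ0
    | mk α s β hs => rw [hσ α β s hs, Brandt.twist_mk]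
  exact hσ_eq ▸ Brandt.isSemigroupAut_twist h φ u

/-- Let `S` be a monoid with zero, `Λ` a nonempty set, `h` an automorphism of the
semigroup `S`, `φ : Λ → Λ` a bijection and `u : Λ → H₁` a map into the group of units
of `S`. Then the map `σ` on `B⁰_Λ(S)` defined by
`σ(α, s, β) = (φ(α), u(α)·h(s)·(u(β))⁻¹, φ(β))` for nonzero `s` and `σ(0) = 0` is an
automorphism of the semigroup `B⁰_Λ(S)`. -/
theorem stmt_0 {Λ S : Type*} [Nonempty Λ] [MonoidWithZero S]
    (h : S ≃* S) (φ : Λ ≃ Λ) (u : Λ → Sˣ)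
    (σ : Brandt Λ S → Brandt Λ S)
    (hσ : ∀ (α β : Λ) (s : S), s ≠ 0 →
      σ (Brandt.mk α s β) = Brandt.mk (φ α) ((u α : S) * h s * ((u β)⁻¹ : Sˣ)) (φ β))
    (hσ0 : σ 0 = 0) :
    IsSemigroupAut σ :=
  stmt_0_general h φ u σ hσ hσ0
end

section
/- Let S be a monoid with zero, λ a nonempty set, and H₁ the group of units of S. For a bijection φ : λ → λ, a semigroup automorphism h of S, and a map u : λ → H₁, let σ_{[φ,h,u]} denote the automorphism of B⁰_λ(S) given by (α, s, β) ↦ (φ(α), u(α)·h(s)·(u(β))⁻¹, φ(β)) and 0 ↦ 0. Then the composition of two such automorphisms satisfies σ_{[φ,h,u]} followed by σ_{[φ',h',u']} equals σ_{[φ∘'φ, h∘'h, w]}, where the composed bijection is λ ∋ α ↦ φ'(φ(α)), the composed automorphism is s ↦ h'(h(s)), and w : λ → H₁ is given by w(α) = u'(φ(α))·h'(u(α)). -/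
/-- `brandtAut φ h u` is the automorphism `σ_{[φ,h,u]}` of `B⁰_Λ(S)` given by
`(α, s, β) ↦ (φ(α), u(α)·h(s)·(u(β))⁻¹, φ(β))` and `0 ↦ 0`. -/
noncomputable def brandtAut {Λ S : Type*} [MonoidWithZero S]
    (φ : Λ ≃ Λ) (h : S ≃* S) (u : Λ → Sˣ) :
    Brandt Λ S → Brandt Λ S
  | some (α, s, β) => Brandt.mk (φ α) ((u α : S) * h s.1 * ((u β)⁻¹ : Sˣ)) (φ β)
  | none => 0

section Aux
variable {S : Type*} [MonoidWithZero S]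

lemma mulEquiv_map_zero' (h : S ≃* S) : h 0 = 0 := by
  have := map_mul h 0 (h.symm 0)
  simp only [zero_mul, h.apply_symm_apply, mul_zero] at this
  exact this

lemma mulEquiv_eq_zero_iff' (h : S ≃* S) (x : S) : h x = 0 ↔ x = 0 := by
  constructor
  · intro hx
    have := congrArg h.symm hx
    rwa [h.symm_apply_apply, mulEquiv_map_zero'] at this
  · rintro rfl; exact mulEquiv_map_zero' h

end Aux


lemma brandtAut_mk {Λ S : Type*} [MonoidWithZero S]
    (φ : Λ ≃ Λ) (h : S ≃* S) (u : Λ → Sˣ) (α β : Λ) (v : S) :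
    brandtAut φ h u (Brandt.mk α v β)
      = Brandt.mk (φ α) ((u α : S) * h v * ((u β)⁻¹ : Sˣ)) (φ β) := by
  by_cases hv : v ≠ 0
  · have h1 : Brandt.mk α v β = some (α, ⟨v, hv⟩, β) := dif_pos hv
    rw [h1]; rfl
  · push_neg at hv
    have h1 : Brandt.mk α v β = (0 : Brandt Λ S) := dif_neg (not_not_intro hv)
    have h2 : brandtAut φ h u 0 = 0 := rfl
    have h3 : (u α : S) * h v * ((u β)⁻¹ : Sˣ) = 0 := by
      rw [hv, mulEquiv_map_zero' h, mul_zero, zero_mul]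
    rw [h1, h2]
    exact (show Brandt.mk (φ α) ((u α : S) * h v * ((u β)⁻¹ : Sˣ)) (φ β) = 0 from
      dif_neg (not_not_intro h3)).symm

/-- The composition of two automorphisms of the form `σ_{[φ,h,u]}` of `B⁰_Λ(S)`:
`σ_{[φ,h,u]}` followed by `σ_{[φ',h',u']}` equals `σ_{[φ∘'φ, h∘'h, w]}`, where the
composed bijection is `α ↦ φ'(φ(α))`, the composed automorphism is `s ↦ h'(h(s))`,
and `w(α) = u'(φ(α))·h'(u(α))`. -/
theorem stmt_7 {Λ S : Type*} [Nonempty Λ] [MonoidWithZero S]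
    (φ φ' : Λ ≃ Λ) (h h' : S ≃* S) (u u' : Λ → Sˣ) :
    brandtAut φ' h' u' ∘ brandtAut φ h u =
      brandtAut (φ.trans φ') (h.trans h')
        (fun α => u' (φ α) * Units.map h'.toMonoidHom (u α)) := by
  funext x
  match x with
  | none => rfl
  | some (α, s, β) =>
    have key : (u' (φ α) : S) * h' ((u α : S) * h s.1 * ((u β)⁻¹ : Sˣ)) * ((u' (φ β))⁻¹ : Sˣ)
        = ((u' (φ α) * Units.map h'.toMonoidHom (u α) : Sˣ) : S) * h' (h s.1)
          * (((u' (φ β) * Units.map h'.toMonoidHom (u β))⁻¹ : Sˣ) : S) := by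
      simp only [map_mul, mul_inv_rev, Units.val_mul, Units.coe_map, Units.coe_map_inv,
        MulEquiv.coe_toMonoidHom, mul_assoc]
    have e1 : (brandtAut φ' h' u' ∘ brandtAut φ h u) (some (α, s, β))
        = brandtAut φ' h' u'
            (Brandt.mk (φ α) ((u α : S) * h s.1 * ((u β)⁻¹ : Sˣ)) (φ β)) := rfl
    rw [e1, brandtAut_mk]
    exact congrArg (fun t => Brandt.mk (φ' (φ α)) t (φ' (φ β))) key
end

section
/- Let S be a monoid with zero, λ a nonempty set, and H₁ the group of units of S. Let G denote the group on 𝒮_λ × Aut(S) × H₁^λ with operation [φ, h, u]·[φ', h', u'] = [φφ', hh', α ↦ u'(φ(α))·h'(u(α))], and let N be the subgroup of G consisting of all triples [φ, h, u] with φ the identity map of λ, u constant with value some ũ ∈ H₁, and h(s) = ũ⁻¹·s·ũ for all s ∈ S. Then N is a normal subgroup of G and the quotient group G/N is isomorphic to the automorphism group Aut(B⁰_λ(S)) of the Brandt λ⁰-extension B⁰_λ(S); in particular, Aut(B⁰_λ(S)) is a homomorphic image of G. -/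
@[ext]
structure GTriple (Λ S : Type*) [Monoid S] where
  φ : Equiv.Perm Λ
  h : S ≃* S
  u : Λ → Sˣ

namespace GTriple

variable {Λ S : Type*} [Monoid S]

instance : Group (GTriple Λ S) where
  mul p q := ⟨p.φ.trans q.φ, p.h.trans q.h,
    fun α => q.u (p.φ α) * Units.map q.h.toMonoidHom (p.u α)⟩
  one := ⟨Equiv.refl Λ, MulEquiv.refl S, fun _ => 1⟩
  inv p := ⟨p.φ.symm, p.h.symm,
    fun α => Units.map p.h.symm.toMonoidHom ((p.u (p.φ.symm α))⁻¹)⟩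
  mul_assoc p q r := by
    refine GTriple.ext ?_ ?_ ?_
    · rfl
    · rfl
    · funext α
      ext
      show (r.u (q.φ (p.φ α)) : S) * r.h ((q.u (p.φ α) : S) * q.h (p.u α)) =
        ((r.u (q.φ (p.φ α)) : S) * r.h (q.u (p.φ α))) * r.h (q.h (p.u α))
      rw [map_mul, mul_assoc]
  one_mul p := by
    refine GTriple.ext ?_ ?_ ?_
    · exact Equiv.ext fun x => rfl
    · exact MulEquiv.ext fun x => rfl
    · funext α
      ext
      show (p.u α : S) * p.h 1 = p.u α
      simp
  mul_one p := by
    refine GTriple.ext ?_ ?_ ?_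
    · exact Equiv.ext fun x => rfl
    · exact MulEquiv.ext fun x => rfl
    · funext α
      ext
      show (1 : S) * (p.u α : S) = p.u α
      simp
  inv_mul_cancel p := by
    refine GTriple.ext ?_ ?_ ?_
    · exact Equiv.ext fun x => p.φ.apply_symm_apply x
    · exact MulEquiv.ext fun x => p.h.apply_symm_apply x
    · funext α
      ext
      show (p.u (p.φ.symm α) : S) * p.h (p.h.symm (((p.u (p.φ.symm α))⁻¹ : Sˣ) : S)) = 1
      simp

@[simp] lemma mul_phi (p q : GTriple Λ S) : (p * q).φ = p.φ.trans q.φ := rfl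
@[simp] lemma mul_h (p q : GTriple Λ S) : (p * q).h = p.h.trans q.h := rfl
@[simp] lemma mul_u (p q : GTriple Λ S) (α : Λ) :
    (p * q).u α = q.u (p.φ α) * Units.map q.h.toMonoidHom (p.u α) := rfl
@[simp] lemma inv_phi (p : GTriple Λ S) : p⁻¹.φ = p.φ.symm := rfl
@[simp] lemma inv_h (p : GTriple Λ S) : p⁻¹.h = p.h.symm := rfl
@[simp] lemma inv_u (p : GTriple Λ S) (α : Λ) :
    p⁻¹.u α = Units.map p.h.symm.toMonoidHom ((p.u (p.φ.symm α))⁻¹) := rfl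
@[simp] lemma one_phi : (1 : GTriple Λ S).φ = Equiv.refl Λ := rfl
@[simp] lemma one_h : (1 : GTriple Λ S).h = MulEquiv.refl S := rfl
@[simp] lemma one_u (α : Λ) : (1 : GTriple Λ S).u α = 1 := rfl

/-- The subgroup `N` of all triples `[φ, h, u]` with `φ` the identity, `u` constant
with some value `v ∈ H₁`, and `h` the inner automorphism `s ↦ v⁻¹·s·v`. -/
def innerN (Λ S : Type*) [Monoid S] : Subgroup (GTriple Λ S) where
  carrier := {p | p.φ = Equiv.refl Λ ∧
    ∃ v : Sˣ, (∀ α : Λ, p.u α = v) ∧ ∀ s : S, p.h s = (v⁻¹ : Sˣ) * s * (v : S)}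
  one_mem' := ⟨rfl, 1, fun _ => rfl, fun s => by simp⟩
  mul_mem' := by
    rintro p q ⟨hpφ, vp, hpu, hph⟩ ⟨hqφ, vq, hqu, hqh⟩
    refine ⟨by simp [hpφ, hqφ], vq * Units.map q.h.toMonoidHom vp, fun α => by
      simp [hpu, hqu], fun s => ?_⟩
    have hv : ∀ t : Sˣ, (Units.map q.h.toMonoidHom t : S) = q.h t := fun t => rfl
    simp only [mul_h, MulEquiv.trans_apply, hph, hqh, map_mul, mul_inv_rev,
      Units.val_mul, hv, map_units_inv]
    simp [hqh, mul_assoc]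
  inv_mem' := by
    rintro p ⟨hpφ, v, hpu, hph⟩
    have hfix : p.h v = v := by rw [hph]; simp [mul_assoc]
    have hfixinv : p.h ((v⁻¹ : Sˣ) : S) = ((v⁻¹ : Sˣ) : S) := by
      rw [hph]; simp [mul_assoc]
    refine ⟨by simp [hpφ], v⁻¹, fun α => ?_, fun s => ?_⟩
    · ext
      show p.h.symm (((p.u (p.φ.symm α))⁻¹ : Sˣ) : S) = ((v⁻¹ : Sˣ) : S)
      rw [hpu]
      exact p.h.symm_apply_eq.mpr hfixinv.symm
    · show p.h.symm s = ((v⁻¹⁻¹ : Sˣ) : S) * s * ((v⁻¹ : Sˣ) : S)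
      rw [p.h.symm_apply_eq, map_mul, map_mul, hph s]
      simp only [inv_inv, hfix, hfixinv]
      simp [mul_assoc]


instance : (innerN Λ S).Normal := by
  constructor
  rintro n ⟨hnφ, v, hnu, hnh⟩ g
  refine ⟨by simp [hnφ], Units.map g.h.symm.toMonoidHom v, fun α => ?_, fun s => ?_⟩
  · ext
    show (g.h.symm ((((g.u (g.φ.symm (n.φ (g.φ α))))⁻¹ : Sˣ) : S)) : S) *
        g.h.symm ((n.u (g.φ α) : S) * n.h (g.u α)) =
      g.h.symm (v : S)
    rw [← map_mul, hnφ, hnu, hnh]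
    congr 1
    simp [mul_assoc]
  · show g.h.symm (n.h (g.h s)) =
      ((Units.map g.h.symm.toMonoidHom v)⁻¹ : Sˣ) * s * ((Units.map g.h.symm.toMonoidHom v : Sˣ) : S)
    rw [hnh, map_mul, map_mul, g.h.symm_apply_apply]
    simp [map_units_inv]

end GTriple

namespace BAux

open Classical

variable {Λ S : Type*} [MonoidWithZero S] [Nontrivial S]

/-- Explicit "nonzero element" constructor for `Brandt`. -/
def el (α : Λ) (a : {s : S // s ≠ 0}) (β : Λ) : Brandt Λ S := some (α, a, β)

lemma el_mul_el (α γ : Λ) (a b : {s : S // s ≠ 0}) (β δ : Λ) :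
    (el α a β : Brandt Λ S) * el γ b δ =
      if h : β = γ ∧ a.1 * b.1 ≠ 0 then el α ⟨a.1 * b.1, h.2⟩ δ else 0 := rfl

lemma el_ne_zero (α : Λ) (a : {s : S // s ≠ 0}) (β : Λ) : (el α a β : Brandt Λ S) ≠ 0 :=
  fun h => Option.some_ne_none _ h

lemma el_inj {α γ : Λ} {a b : {s : S // s ≠ 0}} {β δ : Λ}
    (h : (el α a β : Brandt Λ S) = el γ b δ) : α = γ ∧ a = b ∧ β = δ := by
  have h' : (α, a, β) = (γ, b, δ) := Option.some_injective _ h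
  refine ⟨congrArg Prod.fst h', ?_, ?_⟩
  · exact congrArg (fun p => p.2.1) h'
  · exact congrArg (fun p => p.2.2) h'

lemma cases' (x : Brandt Λ S) : x = 0 ∨ ∃ α a β, x = el α a β := by
  rcases x with _ | ⟨α, a, β⟩
  · exact Or.inl rfl
  · exact Or.inr ⟨α, a, β, rfl⟩

noncomputable instance : MulZeroClass (Brandt Λ S) where
  zero_mul x := rfl
  mul_zero x := by cases x <;> rfl

set_option linter.unusedSectionVars false

section Sigma

variable (σ : Brandt Λ S ≃* Brandt Λ S)

lemma map_eq_zero_iff' (x : Brandt Λ S) : σ x = 0 ↔ x = 0 := by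
  constructor
  · intro h; have := σ.injective (h.trans (map_zero σ).symm); exact this
  · rintro rfl; exact map_zero σ

/-- The "identity" element `(α, 1, α)`. -/
def e (α : Λ) : Brandt Λ S := el α ⟨1, one_ne_zero⟩ α

/-- Left identity property characterizing the `e α`. -/
def LId (x : Brandt Λ S) : Prop := x ≠ 0 ∧ ∀ y, x * y ≠ 0 → x * y = y

lemma e_mul_el (α β : Λ) (a : {s : S // s ≠ 0}) (γ : Λ) (h : α = β) :
    (e α : Brandt Λ S) * el β a γ = el β a γ := by
  rw [e, el_mul_el, dif_pos ⟨h, by simpa using a.2⟩]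
  subst h
  congr 1
  exact Subtype.ext (one_mul _)

lemma el_mul_e (α : Λ) (a : {s : S // s ≠ 0}) (β γ : Λ) (h : β = γ) :
    (el α a β : Brandt Λ S) * e γ = el α a β := by
  rw [e, el_mul_el, dif_pos ⟨h, by simpa using a.2⟩]
  subst h
  congr 1
  exact Subtype.ext (mul_one _)

lemma lid_iff (x : Brandt Λ S) : LId x ↔ ∃ α, x = e α := by
  constructor
  · rintro ⟨hx, hl⟩
    rcases cases' x with rfl | ⟨α, a, β, rfl⟩
    · exact absurd rfl hx
    · refine ⟨β, ?_⟩
      have h1 : (el α a β : Brandt Λ S) * el β ⟨1, one_ne_zero⟩ β =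
          el α ⟨a.1 * 1, by simpa using a.2⟩ β := by
        rw [el_mul_el, dif_pos ⟨rfl, by simpa using a.2⟩]
      have h2 := hl (el β ⟨1, one_ne_zero⟩ β) (by rw [h1]; exact el_ne_zero _ _ _)
      rw [h1] at h2
      obtain ⟨rfl, ha, -⟩ := el_inj h2
      have ha' : a.1 = 1 := by
        have := congrArg Subtype.val ha
        simpa using this
      rw [e]
      congr 1
      exact Subtype.ext ha'
  · rintro ⟨α, rfl⟩
    refine ⟨el_ne_zero _ _ _, fun y hy => ?_⟩
    rcases cases' y with rfl | ⟨γ, b, δ, rfl⟩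
    · rw [mul_zero]
    · by_cases h : α = γ
      · exact e_mul_el α γ b δ h
      · exfalso
        apply hy
        rw [e, el_mul_el, dif_neg]
        rintro ⟨h', -⟩; exact h h'

lemma lid_map {x : Brandt Λ S} (hx : LId x) : LId (σ x) := by
  refine ⟨by rw [Ne, map_eq_zero_iff']; exact hx.1, fun y hy => ?_⟩
  have hy' : x * σ.symm y ≠ 0 := by
    intro h0
    apply hy
    have : σ (x * σ.symm y) = 0 := by rw [h0]; exact map_zero σ
    rwa [map_mul, σ.apply_symm_apply] at this
  have := hx.2 (σ.symm y) hy'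
  calc σ x * y = σ x * σ (σ.symm y) := by rw [σ.apply_symm_apply]
    _ = σ (x * σ.symm y) := (map_mul σ _ _).symm
    _ = y := by rw [this, σ.apply_symm_apply]

/-- The permutation of indices induced by `σ`. -/
noncomputable def phiMap (α : Λ) : Λ :=
  Classical.choose ((lid_iff _).mp (lid_map σ ((lid_iff _).mpr ⟨α, rfl⟩)))

lemma phiMap_spec (α : Λ) : σ (e α) = e (phiMap σ α) :=
  Classical.choose_spec ((lid_iff _).mp (lid_map σ ((lid_iff _).mpr ⟨α, rfl⟩)))

lemma e_inj {α β : Λ} (h : (e α : Brandt Λ S) = e β) : α = β := (el_inj h).1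

lemma phiMap_symm (α : Λ) : phiMap σ.symm (phiMap σ α) = α := by
  apply e_inj (S := S)
  rw [← phiMap_spec, ← phiMap_spec, σ.symm_apply_apply]

end Sigma

section Psi

variable (σ : Brandt Λ S ≃* Brandt Λ S)

lemma component_exists (α : Λ) (a : {s : S // s ≠ 0}) (β : Λ) :
    ∃ c : {s : S // s ≠ 0}, σ (el α a β) = el (phiMap σ α) c (phiMap σ β) := by
  rcases cases' (σ (el α a β)) with h0 | ⟨γ, c, δ, hc⟩
  · exact absurd ((map_eq_zero_iff' σ _).mp h0) (el_ne_zero _ _ _)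
  · refine ⟨c, ?_⟩
    have hleft : (e (phiMap σ α) : Brandt Λ S) * el γ c δ = el γ c δ := by
      rw [← hc, ← phiMap_spec, ← map_mul, e_mul_el α α a β rfl]
    have hright : (el γ c δ : Brandt Λ S) * e (phiMap σ β) = el γ c δ := by
      rw [← hc, ← phiMap_spec, ← map_mul, el_mul_e α a β β rfl]
    have hγ : phiMap σ α = γ := by
      by_contra hne
      rw [e, el_mul_el, dif_neg (fun h => hne h.1)] at hleft
      exact el_ne_zero _ _ _ hleft.symm
    have hδ : δ = phiMap σ β := by
      by_contra hne
      rw [e, el_mul_el, dif_neg (fun h => hne h.1)] at hright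
      exact el_ne_zero _ _ _ hright.symm
    rw [hc, hγ, hδ]

/-- The middle component of `σ (α, a, β)`. -/
noncomputable def psi (α : Λ) (a : {s : S // s ≠ 0}) (β : Λ) : {s : S // s ≠ 0} :=
  Classical.choose (component_exists σ α a β)

lemma psi_spec (α : Λ) (a : {s : S // s ≠ 0}) (β : Λ) :
    σ (el α a β) = el (phiMap σ α) (psi σ α a β) (phiMap σ β) :=
  Classical.choose_spec (component_exists σ α a β)

lemma psi_one (α : Λ) : psi σ α ⟨1, one_ne_zero⟩ α = ⟨1, one_ne_zero⟩ := by
  have h := psi_spec σ α ⟨1, one_ne_zero⟩ α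
  rw [show (el α ⟨1, one_ne_zero⟩ α : Brandt Λ S) = e α from rfl, phiMap_spec] at h
  exact ((el_inj h).2.1).symm

lemma psi_mul_ne (α β δ : Λ) (a b : {s : S // s ≠ 0}) (h : a.1 * b.1 ≠ 0) :
    (psi σ α a β).1 * (psi σ β b δ).1 = (psi σ α ⟨a.1 * b.1, h⟩ δ).1 := by
  have key : σ (el α a β) * σ (el β b δ) = σ (el α ⟨a.1 * b.1, h⟩ δ) := by
    rw [← map_mul]
    congr 1
    rw [el_mul_el, dif_pos ⟨rfl, h⟩]
  rw [psi_spec, psi_spec, psi_spec, el_mul_el] at key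
  split at key
  · exact congrArg Subtype.val (el_inj key).2.1
  · exact absurd key.symm (el_ne_zero _ _ _)

lemma psi_mul_eq (α β δ : Λ) (a b : {s : S // s ≠ 0}) (h : a.1 * b.1 = 0) :
    (psi σ α a β).1 * (psi σ β b δ).1 = 0 := by
  have key : σ (el α a β) * σ (el β b δ) = 0 := by
    rw [← map_mul]
    have : (el α a β : Brandt Λ S) * el β b δ = 0 := by
      rw [el_mul_el, dif_neg (fun hc => hc.2 h)]
    rw [this, map_zero]
  rw [psi_spec, psi_spec, el_mul_el] at key
  split at key
  · exact absurd key (el_ne_zero _ _ _)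
  · rename_i hcon
    by_contra hne
    exact hcon ⟨rfl, hne⟩

lemma psi_symm (α : Λ) (a : {s : S // s ≠ 0}) (β : Λ) :
    psi σ.symm (phiMap σ α) (psi σ α a β) (phiMap σ β) = a := by
  have h := psi_spec σ.symm (phiMap σ α) (psi σ α a β) (phiMap σ β)
  rw [← psi_spec, σ.symm_apply_apply, phiMap_symm, phiMap_symm] at h
  exact ((el_inj h).2.1).symm

end Psi

end BAux

namespace BAux

set_option linter.unusedSectionVars false

section Act

variable {Λ S : Type*} [MonoidWithZero S] [Nontrivial S]

lemma unit_mul_ne {v w : Sˣ} {s : S} (hs : s ≠ 0) : (v : S) * s * (w : S) ≠ 0 := by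
  rw [Ne, Units.mul_left_eq_zero, Units.mul_right_eq_zero]
  exact hs

lemma mulequiv_ne_zero (h : S ≃* S) {s : S} (hs : s ≠ 0) : h s ≠ 0 := by
  intro h0
  exact hs (by rw [← h.symm_apply_apply s, h0, map_zero])

/-- The value of the triple-action on a nonzero element. -/
def actVal (p : GTriple Λ S) (α : Λ) (a : {s : S // s ≠ 0}) (β : Λ) : {s : S // s ≠ 0} :=
  ⟨(p.u α : S) * p.h a.1 * (((p.u β)⁻¹ : Sˣ) : S),
    unit_mul_ne (mulequiv_ne_zero p.h a.2)⟩

/-- The action of a triple on the Brandt extension. -/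
def act (p : GTriple Λ S) : Brandt Λ S → Brandt Λ S
  | none => 0
  | some (α, a, β) => el (p.φ α) (actVal p α a β) (p.φ β)

lemma act_zero (p : GTriple Λ S) : act p (0 : Brandt Λ S) = 0 := rfl

lemma act_el (p : GTriple Λ S) (α : Λ) (a : {s : S // s ≠ 0}) (β : Λ) :
    act p (el α a β) = el (p.φ α) (actVal p α a β) (p.φ β) := rfl

lemma act_one (x : Brandt Λ S) : act (1 : GTriple Λ S) x = x := by
  rcases cases' x with rfl | ⟨α, a, β, rfl⟩
  · rfl
  · rw [act_el]
    show el α _ β = el α a β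
    congr 1
    exact Subtype.ext (by show (1 : S) * a.1 * 1 = a.1; simp)

lemma act_comp (p q : GTriple Λ S) (x : Brandt Λ S) :
    act q (act p x) = act (p * q) x := by
  rcases cases' x with rfl | ⟨α, a, β, rfl⟩
  · rfl
  · rw [act_el, act_el, act_el]
    congr 1
    apply Subtype.ext
    show (q.u (p.φ α) : S) * q.h ((p.u α : S) * p.h a.1 * (((p.u β)⁻¹ : Sˣ) : S)) *
        (((q.u (p.φ β))⁻¹ : Sˣ) : S) =
      ((p * q).u α : S) * q.h (p.h a.1) * ((((p * q).u β)⁻¹ : Sˣ) : S)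
    have hval : ∀ γ : Λ, ((p * q).u γ : S) = (q.u (p.φ γ) : S) * q.h (p.u γ) := fun γ => rfl
    have hinv : ∀ γ : Λ, ((((p * q).u γ)⁻¹ : Sˣ) : S) =
        q.h (((p.u γ)⁻¹ : Sˣ) : S) * (((q.u (p.φ γ))⁻¹ : Sˣ) : S) := by
      intro γ
      rw [GTriple.mul_u, mul_inv_rev, Units.val_mul, Units.coe_map_inv]
      rfl
    rw [hval, hinv, map_mul, map_mul]
    simp only [mul_assoc]

end Act

section ActMul

variable {Λ S : Type*} [MonoidWithZero S] [Nontrivial S]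

lemma actVal_h (p : GTriple Λ S) (α : Λ) (a : {s : S // s ≠ 0}) (β : Λ) :
    (actVal p α a β).1 = (p.u α : S) * p.h a.1 * (((p.u β)⁻¹ : Sˣ) : S) := rfl

lemma act_mul (p : GTriple Λ S) (x y : Brandt Λ S) :
    act p (x * y) = act p x * act p y := by
  rcases cases' x with rfl | ⟨α, a, β, rfl⟩
  · rw [zero_mul, act_zero, zero_mul]
  rcases cases' y with rfl | ⟨γ, b, δ, rfl⟩
  · rw [mul_zero, act_zero, mul_zero]
  rw [act_el, act_el, el_mul_el, el_mul_el]
  by_cases hb : β = γ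
  · subst hb
    by_cases hab : a.1 * b.1 ≠ 0
    · rw [dif_pos ⟨rfl, hab⟩, act_el]
      have hval : (actVal p α a β).1 * (actVal p β b δ).1 =
          (actVal p α ⟨a.1 * b.1, hab⟩ δ).1 := by
        rw [actVal_h, actVal_h, actVal_h]
        have : (((p.u β)⁻¹ : Sˣ) : S) * ((p.u β : S) * p.h b.1) = p.h b.1 := by
          rw [← mul_assoc, Units.inv_mul, one_mul]
        calc (p.u α : S) * p.h a.1 * (((p.u β)⁻¹ : Sˣ) : S) *
              ((p.u β : S) * p.h b.1 * (((p.u δ)⁻¹ : Sˣ) : S))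
            = (p.u α : S) * p.h a.1 * ((((p.u β)⁻¹ : Sˣ) : S) *
              ((p.u β : S) * p.h b.1)) * (((p.u δ)⁻¹ : Sˣ) : S) := by
              simp only [mul_assoc]
          _ = (p.u α : S) * (p.h a.1 * p.h b.1) * (((p.u δ)⁻¹ : Sˣ) : S) := by
              rw [this]; simp only [mul_assoc]
          _ = (p.u α : S) * p.h (a.1 * b.1) * (((p.u δ)⁻¹ : Sˣ) : S) := by
              rw [map_mul]
      rw [dif_pos ⟨rfl, by rw [hval]; exact (actVal p α ⟨a.1 * b.1, hab⟩ δ).2⟩]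
      congr 1
      exact Subtype.ext hval.symm
    · push_neg at hab
      rw [dif_neg (fun hc => hc.2 hab), act_zero, dif_neg]
      rintro ⟨-, hc⟩
      apply hc
      rw [actVal_h, actVal_h]
      calc (p.u α : S) * p.h a.1 * (((p.u β)⁻¹ : Sˣ) : S) *
            ((p.u β : S) * p.h b.1 * (((p.u δ)⁻¹ : Sˣ) : S))
          = (p.u α : S) * (p.h a.1 * ((((p.u β)⁻¹ : Sˣ) : S) *
            ((p.u β : S) * (p.h b.1 * (((p.u δ)⁻¹ : Sˣ) : S))))) := by
            simp only [mul_assoc]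
        _ = (p.u α : S) * (p.h a.1 * (p.h b.1 * (((p.u δ)⁻¹ : Sˣ) : S))) := by
            rw [← mul_assoc ((((p.u β)⁻¹ : Sˣ) : S)), Units.inv_mul, one_mul]
        _ = 0 := by
            rw [← mul_assoc (p.h a.1), ← map_mul, hab, map_zero, zero_mul, mul_zero]
  · rw [dif_neg (fun hc => hb hc.1), act_zero, dif_neg (fun hc => hb (p.φ.injective hc.1))]

/-- The `MulAut` associated with a triple. -/
noncomputable def toAut (p : GTriple Λ S) : MulAut (Brandt Λ S) where
  toFun := act p
  invFun := act p⁻¹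
  left_inv x := by rw [act_comp, mul_inv_cancel, act_one]
  right_inv x := by rw [act_comp, inv_mul_cancel, act_one]
  map_mul' := act_mul p

lemma toAut_apply (p : GTriple Λ S) (x : Brandt Λ S) : toAut p x = act p x := rfl

/-- The homomorphism `G → Aut(B⁰_Λ(S))`. -/
noncomputable def F (Λ S : Type*) [MonoidWithZero S] [Nontrivial S] :
    GTriple Λ S →* MulAut (Brandt Λ S) :=
  MonoidHom.mk' (fun p => toAut p⁻¹) (by
    intro p q
    apply MulEquiv.ext
    intro x
    rw [MulAut.mul_apply, toAut_apply, toAut_apply, toAut_apply, act_comp, mul_inv_rev])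

end ActMul

noncomputable def bp (Λ : Type*) [Nonempty Λ] : Λ := Classical.arbitrary Λ

section Surj

variable {Λ S : Type*} [Nonempty Λ] [MonoidWithZero S] [Nontrivial S]

noncomputable def oneS : {s : S // s ≠ 0} := ⟨1, one_ne_zero⟩

variable (σ : Brandt Λ S ≃* Brandt Λ S)

lemma psi_oneS (α : Λ) : psi σ α (oneS : {s : S // s ≠ 0}) α = oneS := psi_one σ α

lemma psi_unit (α β : Λ) :
    (psi σ α (oneS : {s : S // s ≠ 0}) β).1 * (psi σ β oneS α).1 = 1 := by
  have h := psi_mul_ne σ α β α oneS oneS (by simp [oneS])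
  rw [h]
  have h2 : (⟨(oneS : {s : S // s ≠ 0}).1 * (oneS : {s : S // s ≠ 0}).1, by simp [oneS]⟩ :
      {s : S // s ≠ 0}) = oneS := Subtype.ext (by simp [oneS])
  rw [h2, psi_oneS]
  rfl

/-- The unit `u α` associated with `σ`. -/
noncomputable def uMap (α : Λ) : Sˣ where
  val := (psi σ α (oneS : {s : S // s ≠ 0}) (bp Λ)).1
  inv := (psi σ (bp Λ) (oneS : {s : S // s ≠ 0}) α).1
  val_inv := psi_unit σ α (bp Λ)
  inv_val := psi_unit σ (bp Λ) α

lemma uMap_val (α : Λ) : (uMap σ α : S) = (psi σ α (oneS : {s : S // s ≠ 0}) (bp Λ)).1 := rfl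

lemma uMap_inv_val (α : Λ) :
    (((uMap σ α)⁻¹ : Sˣ) : S) = (psi σ (bp Λ) (oneS : {s : S // s ≠ 0}) α).1 := rfl

open Classical in
/-- The automorphism of `S` associated with `σ`. -/
noncomputable def hFun (s : S) : S :=
  if hs : s = 0 then 0 else (psi σ (bp Λ) ⟨s, hs⟩ (bp Λ)).1

open Classical in
noncomputable def gFun (t : S) : S :=
  if ht : t = 0 then 0
  else (psi σ.symm (phiMap σ (bp Λ)) ⟨t, ht⟩ (phiMap σ (bp Λ))).1

lemma hFun_ne {s : S} (hs : s ≠ 0) : hFun σ s = (psi σ (bp Λ) ⟨s, hs⟩ (bp Λ)).1 :=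
  dif_neg hs

lemma hFun_zero : hFun σ (0 : S) = 0 := dif_pos rfl

lemma gFun_ne {t : S} (ht : t ≠ 0) :
    gFun σ t = (psi σ.symm (phiMap σ (bp Λ)) ⟨t, ht⟩ (phiMap σ (bp Λ))).1 := dif_neg ht

lemma gFun_zero : gFun σ (0 : S) = 0 := dif_pos rfl

lemma hFun_mul (s t : S) : hFun σ (s * t) = hFun σ s * hFun σ t := by
  by_cases hs : s = 0
  · subst hs; rw [zero_mul, hFun_zero, zero_mul]
  by_cases ht : t = 0
  · subst ht; rw [mul_zero, hFun_zero, mul_zero]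
  by_cases hst : s * t = 0
  · rw [hst, hFun_zero, hFun_ne σ hs, hFun_ne σ ht]
    exact (psi_mul_eq σ (bp Λ) (bp Λ) (bp Λ) ⟨s, hs⟩ ⟨t, ht⟩ hst).symm
  · rw [hFun_ne σ hst, hFun_ne σ hs, hFun_ne σ ht,
      psi_mul_ne σ (bp Λ) (bp Λ) (bp Λ) ⟨s, hs⟩ ⟨t, ht⟩ hst]

lemma g_h (s : S) : gFun σ (hFun σ s) = s := by
  by_cases hs : s = 0
  · subst hs; rw [hFun_zero, gFun_zero]
  · rw [hFun_ne σ hs, gFun_ne σ (psi σ (bp Λ) ⟨s, hs⟩ (bp Λ)).2]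
    have : (⟨(psi σ (bp Λ) ⟨s, hs⟩ (bp Λ)).1, (psi σ (bp Λ) ⟨s, hs⟩ (bp Λ)).2⟩ :
        {s : S // s ≠ 0}) = psi σ (bp Λ) ⟨s, hs⟩ (bp Λ) := rfl
    rw [this, psi_symm]

lemma h_g (t : S) : hFun σ (gFun σ t) = t := by
  by_cases ht : t = 0
  · subst ht; rw [gFun_zero, hFun_zero]
  · rw [gFun_ne σ ht]
    set c := psi σ.symm (phiMap σ (bp Λ)) ⟨t, ht⟩ (phiMap σ (bp Λ)) with hc
    rw [hFun_ne σ c.2]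
    have hcc : (⟨c.1, c.2⟩ : {s : S // s ≠ 0}) = c := rfl
    rw [hcc]
    -- σ.symm (el φbp t φbp) = el bp c bp, so el φbp t φbp = σ (el bp c bp)
    have h1 := psi_spec σ.symm (phiMap σ (bp Λ)) ⟨t, ht⟩ (phiMap σ (bp Λ))
    rw [phiMap_symm] at h1
    have h2 : (el (phiMap σ (bp Λ)) ⟨t, ht⟩ (phiMap σ (bp Λ)) : Brandt Λ S) =
        σ (el (bp Λ) c (bp Λ)) := by
      rw [← h1, σ.apply_symm_apply]
    rw [psi_spec] at h2
    exact congrArg Subtype.val (el_inj h2).2.1.symm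

/-- The permutation associated with `σ`. -/
noncomputable def phiPerm : Equiv.Perm Λ where
  toFun := phiMap σ
  invFun := phiMap σ.symm
  left_inv := phiMap_symm σ
  right_inv := fun β => by
    have h := phiMap_symm σ.symm β
    rwa [MulEquiv.symm_symm] at h

/-- The mul-equivalence of `S` associated with `σ`. -/
noncomputable def hEquiv : S ≃* S where
  toFun := hFun σ
  invFun := gFun σ
  left_inv := g_h σ
  right_inv := h_g σ
  map_mul' := hFun_mul σ

/-- The triple associated with `σ`. -/
noncomputable def trip : GTriple Λ S := ⟨phiPerm σ, hEquiv σ, uMap σ⟩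

lemma act_trip (x : Brandt Λ S) : act (trip σ) x = σ x := by
  rcases cases' x with rfl | ⟨α, a, β, rfl⟩
  · rw [act_zero, map_zero]
  · rw [act_el, psi_spec σ α a β]
    have hφ : ∀ γ : Λ, (trip σ).φ γ = phiMap σ γ := fun γ => rfl
    rw [hφ, hφ]
    congr 1
    apply Subtype.ext
    rw [actVal_h]
    have hu : ((trip σ).u α : S) = (psi σ α (oneS : {s : S // s ≠ 0}) (bp Λ)).1 := rfl
    have hui : ((((trip σ).u β)⁻¹ : Sˣ) : S) =
        (psi σ (bp Λ) (oneS : {s : S // s ≠ 0}) β).1 := rfl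
    have hh : (trip σ).h a.1 = (psi σ (bp Λ) (⟨a.1, a.2⟩ : {s : S // s ≠ 0}) (bp Λ)).1 :=
      hFun_ne σ a.2
    have haa : (⟨a.1, a.2⟩ : {s : S // s ≠ 0}) = a := rfl
    rw [hu, hui, hh, haa]
    have h1 : (1 : S) * a.1 ≠ 0 := by simpa using a.2
    have step1 := psi_mul_ne σ α (bp Λ) (bp Λ) oneS a (by simpa [oneS] using h1)
    have h2 : ((oneS : {s : S // s ≠ 0}).1 * a.1) * (1 : S) ≠ 0 := by
      simpa [oneS] using a.2
    have step2 := psi_mul_ne σ α (bp Λ) β ⟨(oneS : {s : S // s ≠ 0}).1 * a.1, by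
      simpa [oneS] using a.2⟩ oneS (by simpa [oneS] using h2)
    rw [step1, step2]
    congr 1
    exact Subtype.ext (by simp [oneS])

end Surj

section Ker

variable {Λ S : Type*} [Nonempty Λ] [MonoidWithZero S] [Nontrivial S]

lemma act_id_of_mem {q : GTriple Λ S} (hq : q ∈ GTriple.innerN Λ S) (x : Brandt Λ S) :
    act q x = x := by
  obtain ⟨hφ, v, hu, hh⟩ := hq
  rcases cases' x with rfl | ⟨α, a, β, rfl⟩
  · rw [act_zero]
  · rw [act_el]
    have hφ' : ∀ γ, q.φ γ = γ := fun γ => by rw [hφ]; rfl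
    rw [hφ', hφ']
    congr 1
    apply Subtype.ext
    rw [actVal_h, hu, hu, hh]
    simp [mul_assoc]

lemma mem_of_act_id {q : GTriple Λ S} (hq : ∀ x : Brandt Λ S, act q x = x) :
    q ∈ GTriple.innerN Λ S := by
  have key : ∀ α β : Λ, q.φ α = α ∧ (actVal q α (oneS : {s : S // s ≠ 0}) β) = oneS ∧
      q.φ β = β := fun α β => el_inj (by rw [← act_el]; exact hq _)
  have hφ : q.φ = Equiv.refl Λ := Equiv.ext fun α => (key α α).1
  have huu : ∀ α β : Λ, q.u α = q.u β := by
    intro α β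
    have h := congrArg Subtype.val (key α β).2.1
    rw [actVal_h] at h
    have h1 : (q.h (oneS : {s : S // s ≠ 0}).1 : S) = 1 := by
      show q.h (1 : S) = 1; exact map_one q.h
    rw [h1, mul_one] at h
    have : q.u α * (q.u β)⁻¹ = 1 := Units.ext (by rw [Units.val_mul]; exact h)
    exact (mul_inv_eq_one.mp this)
  refine ⟨hφ, q.u (bp Λ), fun α => huu α (bp Λ), fun s => ?_⟩
  by_cases hs : s = 0
  · subst hs
    rw [map_zero, mul_zero, zero_mul]
  · have h := hq (el (bp Λ) ⟨s, hs⟩ (bp Λ))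
    rw [act_el] at h
    have hval := congrArg Subtype.val (el_inj h).2.1
    rw [actVal_h] at hval
    -- hval : u * q.h s * u⁻¹ = s
    set v := q.u (bp Λ)
    calc q.h s = ((v⁻¹ : Sˣ) : S) * ((v : S) * q.h s * ((v⁻¹ : Sˣ) : S)) * (v : S) := by
          simp [mul_assoc]
      _ = ((v⁻¹ : Sˣ) : S) * s * (v : S) := by rw [hval]

lemma ker_F : (F Λ S).ker = GTriple.innerN Λ S := by
  ext p
  constructor
  · intro hp
    have h1 : toAut p⁻¹ = 1 := hp
    have h2 : ∀ x, act p⁻¹ x = x := fun x => by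
      have := DFunLike.congr_fun (congrArg (MulEquiv.toEquiv) h1) x
      simpa [toAut] using this
    exact (inv_mem_iff).mp (mem_of_act_id h2)
  · intro hp
    show toAut p⁻¹ = 1
    apply MulEquiv.ext
    intro x
    rw [toAut_apply, act_id_of_mem ((inv_mem_iff).mpr hp)]
    rfl

lemma F_surj : Function.Surjective (F Λ S) := by
  intro σ
  refine ⟨(trip σ)⁻¹, ?_⟩
  show toAut (trip σ)⁻¹⁻¹ = σ
  rw [inv_inv]
  exact MulEquiv.ext (act_trip σ)

end Ker

end BAux

/-- Let `S` be a monoid with zero, `Λ` a nonempty set and `H₁` the group of units of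
`S`. Let `G` be the group on `𝒮_Λ × Aut(S) × H₁^Λ` with operation
`[φ, h, u]·[φ', h', u'] = [φφ', hh', α ↦ u'(φ(α))·h'(u(α))]` and let `N ≤ G` consist
of all triples `[φ, h, u]` with `φ = id_Λ`, `u` constant with value some `ũ ∈ H₁` and
`h(s) = ũ⁻¹·s·ũ` for all `s`. Then `N` is a normal subgroup of `G` and the quotient
group `G/N` is isomorphic to the automorphism group `Aut(B⁰_Λ(S))`; in particular,
`Aut(B⁰_Λ(S))` is a homomorphic image of `G`. -/
theorem stmt_11 {Λ S : Type*} [Nonempty Λ] [MonoidWithZero S] [Nontrivial S] :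
    (GTriple.innerN Λ S).Normal ∧
    Nonempty ((GTriple Λ S ⧸ GTriple.innerN Λ S) ≃* MulAut (Brandt Λ S)) ∧
    ∃ F : GTriple Λ S →* MulAut (Brandt Λ S), Function.Surjective F := by
  refine ⟨inferInstance, ⟨?_⟩, BAux.F Λ S, BAux.F_surj⟩
  exact (QuotientGroup.quotientMulEquivOfEq BAux.ker_F.symm).trans
    (QuotientGroup.quotientKerEquivOfSurjective (BAux.F Λ S) BAux.F_surj)
end
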